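/- Let (F_1, F_2) be any Nash equilibrium of the single-item all-pay auction with parameters (B_1, B_2, v_1, v_2). Then: (1) if B_1 = B_2 and B_2 < (1/2)·min{v_1, v_2}, then inf Supp(F_i) = sup Supp(F_i) for each i ∈ {1,2}; (2) if B_1 = B_2 = (1/2)·min{v_1, v_2} and i is a player with v_i = min{v_1, v_2}, then either inf Supp(F_1) = sup Supp(F_1) and inf Supp(F_2) = sup Supp(F_2), or inf Supp(F_i) = 0 and inf Supp(F_{3−i}) = sup Supp(F_{3−i}); (3) if B_1 ≠ B_2, then inf Supp(F_1) = inf Supp(F_2) = 0. -/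

import Mathlib

open MeasureTheory Set

noncomputable section

/-- `L = min {B₁, B₂, v₁, v₂}` for the single-item auction. -/
def Lval (B v : Fin 2 → ℝ) : ℝ := min (min (B 0) (B 1)) (min (v 0) (v 1))

/-- Probability that player `i` wins the single item when bidding `xi` while the
opponent bids `xo`: the strictly higher bid wins; on a tie at
`min {B₁, B₂, v₁, v₂}` the player with the strictly larger `min {Bᵢ, vᵢ}` wins,
and all other ties are resolved by a fair coin. -/
def winProb (B v : Fin 2 → ℝ) (i : Fin 2) (xi xo : ℝ) : ℝ :=
  if xo < xi then 1
  else if xi < xo then 0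
  else if xi = Lval B v ∧ min (B (1 - i)) (v (1 - i)) < min (B i) (v i) then 1
  else if xi = Lval B v ∧ min (B i) (v i) < min (B (1 - i)) (v (1 - i)) then 0
  else 1 / 2

/-- Expected utility of player `i` from the pure bids `xi` (own) and `xo` (opponent):
he pays his bid in any case and receives `v i` with his winning probability. -/
def payoff (B v : Fin 2 → ℝ) (i : Fin 2) (xi xo : ℝ) : ℝ :=
  winProb B v i xi xo * v i - xi

/-- A mixed strategy of a player with budget `Bi`: a probability measure on `[0, Bi]`. -/
def IsStrategy (Bi : ℝ) (μ : Measure ℝ) : Prop :=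
  IsProbabilityMeasure μ ∧ μ (Icc 0 Bi) = 1

/-- Expected utility of player `i` when he plays `μ` and the opponent plays `ν`. -/
def expUtil (B v : Fin 2 → ℝ) (i : Fin 2) (μ ν : Measure ℝ) : ℝ :=
  ∫ xi, (∫ xo, payoff B v i xi xo ∂ν) ∂μ

/-- `(F 0, F 1)` is a (mixed) Nash equilibrium of the single-item all-pay auction. -/
def IsNash (B v : Fin 2 → ℝ) (F : Fin 2 → Measure ℝ) : Prop :=
  (∀ i, IsStrategy (B i) (F i)) ∧
  ∀ i, ∀ μ, IsStrategy (B i) μ →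
    expUtil B v i μ (F (1 - i)) ≤ expUtil B v i (F i) (F (1 - i))

/-- The (topological) support of a mixed strategy. -/
def supp (μ : Measure ℝ) : Set ℝ := {x | ∀ U ∈ nhds x, μ U ≠ 0}

/-!
Write `t i` for the lowest bid in the support of `F i` and `u i` for the equilibrium payoff of
player `i`. No pure bid in `[0, B i]` earns more than `u i`, and `F i`-almost every bid earns
exactly `u i`. Bidding just above `x < B i` gives `v i * F (1 - i) (≤ x) - x ≤ u i`; optimal
bids accumulating at `t i` from the right give `u i ≤ v i * F (1 - i) (≤ t i) - t i`. Hence a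
point that is an atom of both strategies and lies below `B i` must be a tie that `i` wins
outright, so it is `L` and it cannot lie below both budgets.

If `t a < t (1 - a)`, bids of `a` below `t (1 - a)` never win, so `a` earns `0` and puts all
that mass on `0`. Bidding just above `0`, the opponent earns at least `v (1 - a) * F a {0}`, which
forces an atom of `a` at `t (1 - a)`, and one of `1 - a` there too; as `a` must not lose that tie,
`t (1 - a) = B (1 - a)`. If `t 0 = t 1 = t` and `u i + t > 0` for both `i`, both players have an
atom at `t`, so `t` is one of the budgets. With unequal budgets the player with the larger budget
wins every such tie, leaving the other less than it can secure elsewhere, so `t 0 = t 1 = 0`.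
With equal budgets `B ≤ v / 2` a bid of `B` ties fairly: for `B < v / 2` both payoffs are then
positive, and for `B = v / 2` only the player with the larger valuation can sit at the top of a
gap.
-/

open Filter Topology

namespace AllPay

lemma apply_one_sub_eq_of_eq {α : Type*} {f : Fin 2 → α} (h : f 0 = f 1) (j : Fin 2) :
    f (1 - j) = f j := by
  fin_cases j <;> simp [h]

lemma eq_of_apply_one_sub_eq {α : Type*} {f : Fin 2 → α} {i : Fin 2} (h : f (1 - i) = f i) :
    f 0 = f 1 := by
  fin_cases i
  exacts [h.symm, h]

lemma exists_lt_apply_one_sub_or_eq (f : Fin 2 → ℝ) :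
    (∃ a, f a < f (1 - a)) ∨ ∀ j, f (1 - j) = f j := by
  rcases lt_trichotomy (f 0) (f 1) with h | h | h
  · exact Or.inl ⟨0, h⟩
  · exact Or.inr (apply_one_sub_eq_of_eq h)
  · exact Or.inl ⟨1, h⟩

lemma eq_or_eq_one_sub (i a : Fin 2) : i = a ∨ i = 1 - a := by
  fin_cases i <;> fin_cases a <;> simp

lemma supp_eq_support (μ : Measure ℝ) : supp μ = μ.support := by
  ext x
  simp [supp, Measure.mem_support_iff_forall, pos_iff_ne_zero]

lemma _root_.MeasureTheory.Measure.frequently_nhds_of_mem_support {X : Type*}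
    [TopologicalSpace X] [MeasurableSpace X] {μ : Measure X} {x : X} {p : X → Prop}
    (hx : x ∈ μ.support) (hp : ∀ᵐ y ∂μ, p y) : ∃ᶠ y in 𝓝 x, p y :=
  fun h => ((Measure.mem_support_iff_forall x).1 hx _ h).ne' (ae_iff.1 hp)

lemma measureReal_Iic_eq_add (μ : Measure ℝ) [IsFiniteMeasure μ] (x : ℝ) :
    μ.real (Iic x) = μ.real (Iio x) + μ.real {x} := by
  rw [← Iio_union_right, measureReal_union (by simp) (measurableSet_singleton x)]

variable {B v : Fin 2 → ℝ} {F : Fin 2 → Measure ℝ} {i : Fin 2} {x y : ℝ}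

lemma min_eq_of_budget_eq (hB : ∀ j, B (1 - j) = B j) (hBv : ∀ j, B j ≤ v j) (j : Fin 2) :
    min (B (1 - j)) (v (1 - j)) = min (B j) (v j) := by
  rw [min_eq_left (hBv _), min_eq_left (hBv _), hB]

def WinsTie (B v : Fin 2 → ℝ) (i : Fin 2) (x : ℝ) : Prop :=
  x = Lval B v ∧ min (B (1 - i)) (v (1 - i)) < min (B i) (v i)

lemma winProb_nonneg : 0 ≤ winProb B v i x y := by
  unfold winProb
  split_ifs <;> norm_num

lemma winProb_le_one : winProb B v i x y ≤ 1 := by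
  unfold winProb
  split_ifs <;> norm_num

lemma winProb_self_eq_half_of_min_eq (h : min (B (1 - i)) (v (1 - i)) = min (B i) (v i)) :
    winProb B v i x x = 1 / 2 := by
  simp [winProb, h]

lemma winsTie_of_one_le_winProb_self (h : 1 ≤ winProb B v i x x) : WinsTie B v i x := by
  simp only [winProb, lt_irrefl, if_false] at h
  split_ifs at h with hprio
  · exact hprio
  all_goals norm_num at h

lemma winProb_opp_self_of_winsTie (h : WinsTie B v i x) : winProb B v (1 - i) x x = 0 := by
  simp [winProb, sub_sub_cancel, h.1, h.2, h.2.not_gt]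

lemma not_winsTie_opp_of_winsTie (h : WinsTie B v i x) : ¬WinsTie B v (1 - i) x := fun h' => by
  rw [WinsTie, sub_sub_cancel] at h'
  exact h.2.asymm h'.2

def pureWinProb (B v : Fin 2 → ℝ) (F : Fin 2 → Measure ℝ) (i : Fin 2) (x : ℝ) : ℝ :=
  (F (1 - i)).real (Iio x) + winProb B v i x x * (F (1 - i)).real {x}

def pureUtil (B v : Fin 2 → ℝ) (F : Fin 2 → Measure ℝ) (i : Fin 2) (x : ℝ) : ℝ :=
  pureWinProb B v F i x * v i - x

def nashValue (B v : Fin 2 → ℝ) (F : Fin 2 → Measure ℝ) (i : Fin 2) : ℝ :=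
  expUtil B v i (F i) (F (1 - i))

def minBid (F : Fin 2 → Measure ℝ) (i : Fin 2) : ℝ := sInf (supp (F i))

lemma measureReal_Iio_le_pureWinProb : (F (1 - i)).real (Iio x) ≤ pureWinProb B v F i x :=
  le_add_of_nonneg_right (mul_nonneg winProb_nonneg measureReal_nonneg)

lemma pureWinProb_le_measureReal_Iic [IsFiniteMeasure (F (1 - i))] :
    pureWinProb B v F i x ≤ (F (1 - i)).real (Iic x) := by
  rw [measureReal_Iic_eq_add, pureWinProb]
  gcongr
  exact mul_le_of_le_one_left measureReal_nonneg winProb_le_one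

lemma measurable_pureUtil [IsFiniteMeasure (F (1 - i))] : Measurable (pureUtil B v F i) := by
  have hmono : ∀ s : ℝ → Set ℝ, Monotone s → Measurable fun x => (F (1 - i)).real (s x) :=
    fun s hs => Monotone.measurable fun x y hxy => measureReal_mono (hs hxy)
  have hIio := hmono Iio fun _ _ => Iio_subset_Iio
  have hIic := hmono Iic fun _ _ => Iic_subset_Iic.2
  -- the atom function `x ↦ F {x}` is the difference of two monotone functions
  have hatom : Measurable fun x => (F (1 - i)).real {x} := by
    convert hIic.sub hIio using 1
    ext x
    simp [measureReal_Iic_eq_add]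
  have htie : Measurable fun x : ℝ => winProb B v i x x := by
    unfold winProb
    simp only [lt_self_iff_false, if_false]
    exact Measurable.ite ((measurableSet_singleton _).inter (MeasurableSet.const _))
      measurable_const (Measurable.ite ((measurableSet_singleton _).inter
        (MeasurableSet.const _)) measurable_const measurable_const)
  exact ((hIio.add (htie.mul hatom)).mul_const _).sub measurable_id

end AllPay

open AllPay

namespace IsNash

variable {B v : Fin 2 → ℝ} {F : Fin 2 → Measure ℝ} {i : Fin 2} {x : ℝ}

lemma isProbabilityMeasure (hN : IsNash B v F) (i : Fin 2) : IsProbabilityMeasure (F i) :=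
  (hN.1 i).1

variable (hN : IsNash B v F)
include hN

lemma ae_mem_Icc (i : Fin 2) : ∀ᵐ x ∂F i, x ∈ Icc 0 (B i) := by
  have := hN.isProbabilityMeasure i
  exact (mem_ae_iff_prob_eq_one measurableSet_Icc).2 (hN.1 i).2

lemma budget_nonneg (i : Fin 2) : 0 ≤ B i := by
  have := hN.isProbabilityMeasure i
  obtain ⟨x, hx⟩ := (hN.ae_mem_Icc i).exists
  exact hx.1.trans hx.2

lemma mem_Icc_of_measure_singleton_ne_zero (h : F i {x} ≠ 0) : x ∈ Icc 0 (B i) := by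
  by_contra hx
  exact h (measure_mono_null (singleton_subset_iff.2 hx) (ae_iff.1 (hN.ae_mem_Icc i)))

lemma measureReal_Iic_budget (i : Fin 2) : (F i).real (Iic (B i)) = 1 := by
  have := hN.isProbabilityMeasure i
  refine le_antisymm measureReal_le_one ?_
  calc (1 : ℝ) = (F i).real (Icc 0 (B i)) := by simp [measureReal_def, (hN.1 i).2]
    _ ≤ (F i).real (Iic (B i)) := measureReal_mono Icc_subset_Iic_self

lemma integral_payoff (i : Fin 2) (x : ℝ) :
    ∫ y, payoff B v i x y ∂F (1 - i) = pureUtil B v F i x := by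
  have := hN.isProbabilityMeasure (1 - i)
  have hsplit : (fun y => winProb B v i x y) =
      fun y => (Iio x).indicator (fun _ => 1) y +
        ({x} : Set ℝ).indicator (fun _ => winProb B v i x x) y := by
    ext y
    rcases lt_trichotomy y x with h | rfl | h
    · simp [winProb, h, h.ne]
    · simp
    · simp [winProb, h, h.not_gt, h.ne']
  have hint : Integrable (fun y => winProb B v i x y) (F (1 - i)) := by
    rw [hsplit]
    exact ((integrable_const _).indicator measurableSet_Iio).add
      ((integrable_const _).indicator (measurableSet_singleton x))
  simp only [payoff]
  rw [integral_sub (hint.mul_const _) (integrable_const _), integral_mul_const, hsplit,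
    integral_add ((integrable_const _).indicator measurableSet_Iio)
      ((integrable_const _).indicator (measurableSet_singleton x)),
    integral_indicator_const _ measurableSet_Iio,
    integral_indicator_const _ (measurableSet_singleton x)]
  simp [pureUtil, pureWinProb, mul_comm]

lemma integrable_pureUtil (i : Fin 2) : Integrable (pureUtil B v F i) (F i) := by
  have := hN.isProbabilityMeasure (1 - i)
  have := hN.isProbabilityMeasure i
  refine Integrable.of_bound measurable_pureUtil.aestronglyMeasurable (|v i| + B i) ?_
  filter_upwards [hN.ae_mem_Icc i] with x hx
  have hW0 : 0 ≤ pureWinProb B v F i x :=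
    measureReal_nonneg.trans measureReal_Iio_le_pureWinProb
  have hW1 : pureWinProb B v F i x ≤ 1 := pureWinProb_le_measureReal_Iic.trans measureReal_le_one
  rw [Real.norm_eq_abs, pureUtil, abs_le]
  constructor <;> nlinarith [abs_nonneg (v i), le_abs_self (v i), neg_abs_le (v i), hx.1, hx.2]

lemma pureUtil_le_nashValue (hx : x ∈ Icc 0 (B i)) :
    pureUtil B v F i x ≤ nashValue B v F i := by
  have h := hN.2 i (Measure.dirac x) ⟨inferInstance, Measure.dirac_apply_of_mem hx⟩
  rwa [expUtil, integral_dirac, hN.integral_payoff] at h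

lemma ae_pureUtil_eq (i : Fin 2) : ∀ᵐ x ∂F i, pureUtil B v F i x = nashValue B v F i := by
  have := hN.isProbabilityMeasure i
  refine (integral_eq_iff_of_ae_le (hN.integrable_pureUtil i) (integrable_const _)
    ((hN.ae_mem_Icc i).mono fun x hx => hN.pureUtil_le_nashValue hx)).1 ?_
  simp only [nashValue, expUtil, hN.integral_payoff, integral_const, probReal_univ, one_smul]

lemma pureUtil_eq_of_measure_singleton_ne_zero (h : F i {x} ≠ 0) :
    pureUtil B v F i x = nashValue B v F i := by
  by_contra hx
  exact h (measure_mono_null (singleton_subset_iff.2 hx) (ae_iff.1 (hN.ae_pureUtil_eq i)))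

lemma nashValue_nonneg (hv : 0 ≤ v i) : 0 ≤ nashValue B v F i := by
  refine le_trans ?_ (hN.pureUtil_le_nashValue ⟨le_rfl, hN.budget_nonneg i⟩)
  rw [pureUtil, sub_zero]
  exact mul_nonneg (measureReal_nonneg.trans measureReal_Iio_le_pureWinProb) hv

lemma supp_subset_Icc (i : Fin 2) : supp (F i) ⊆ Icc 0 (B i) := by
  rw [supp_eq_support]
  exact Measure.support_subset_of_isClosed isClosed_Icc (hN.ae_mem_Icc i)

lemma minBid_le_of_mem_supp (hx : x ∈ supp (F i)) : minBid F i ≤ x :=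
  csInf_le (bddBelow_Icc.mono (hN.supp_subset_Icc i)) hx

lemma minBid_mem_supp (i : Fin 2) : minBid F i ∈ supp (F i) := by
  have := hN.isProbabilityMeasure i
  have hsupp := hN.supp_subset_Icc i
  rw [supp_eq_support] at hsupp
  rw [minBid, supp_eq_support]
  exact Measure.isClosed_support.csInf_mem (Measure.nonempty_support (NeZero.ne _))
    (bddBelow_Icc.mono hsupp)

lemma minBid_mem_Icc (i : Fin 2) : minBid F i ∈ Icc 0 (B i) :=
  hN.supp_subset_Icc i (hN.minBid_mem_supp i)

lemma measure_Iio_minBid (i : Fin 2) : F i (Iio (minBid F i)) = 0 := by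
  have hnull : F i (supp (F i))ᶜ = 0 := by
    rw [supp_eq_support]
    exact Measure.measure_compl_support
  exact measure_mono_null (fun y hy hy' => (hN.minBid_le_of_mem_supp hy').not_gt hy) hnull

lemma frequently_optimal_near_minBid (i : Fin 2) :
    ∃ᶠ x in 𝓝 (minBid F i), minBid F i ≤ x ∧ pureUtil B v F i x = nashValue B v F i := by
  have hmem := hN.minBid_mem_supp i
  rw [supp_eq_support] at hmem
  have hge : ∀ᵐ x ∂F i, minBid F i ≤ x := by
    rw [ae_iff]
    simp only [not_le]
    exact hN.measure_Iio_minBid i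
  exact Measure.frequently_nhds_of_mem_support hmem (hge.and (hN.ae_pureUtil_eq i))

lemma nashValue_le_at_minBid (hv : 0 ≤ v i) :
    nashValue B v F i ≤ (F (1 - i)).real (Iic (minBid F i)) * v i - minBid F i := by
  have := hN.isProbabilityMeasure (1 - i)
  set g : ℝ → ℝ := fun x => ProbabilityTheory.cdf (F (1 - i)) x * v i - x
  have hg : Tendsto g (𝓝[≥] minBid F i) (𝓝 (g (minBid F i))) :=
    (((ProbabilityTheory.cdf _).right_continuous _).mul continuousWithinAt_const).sub
      continuousWithinAt_id
  have hfreq : ∃ᶠ x in 𝓝[≥] minBid F i, nashValue B v F i ≤ g x := by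
    rw [frequently_nhdsWithin_iff]
    refine (hN.frequently_optimal_near_minBid i).mono fun x ⟨hle, hopt⟩ => ⟨?_, hle⟩
    rw [← hopt, pureUtil]
    simp only [g, ProbabilityTheory.cdf_eq_real]
    gcongr
    exact pureWinProb_le_measureReal_Iic
  simpa [g, ProbabilityTheory.cdf_eq_real] using ge_of_tendsto_of_frequently hg hfreq

lemma le_nashValue_of_lt_budget (hv : 0 ≤ v i) (hx0 : 0 ≤ x) (hxB : x < B i) :
    (F (1 - i)).real (Iic x) * v i - x ≤ nashValue B v F i := by
  have := hN.isProbabilityMeasure (1 - i)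
  have hlim : Tendsto (fun y => (F (1 - i)).real (Iic x) * v i - y) (𝓝[>] x)
      (𝓝 ((F (1 - i)).real (Iic x) * v i - x)) :=
    ((continuous_const.sub continuous_id).tendsto x).mono_left nhdsWithin_le_nhds
  refine le_of_tendsto hlim ?_
  filter_upwards [Ioo_mem_nhdsGT hxB] with y hy
  calc (F (1 - i)).real (Iic x) * v i - y ≤ (F (1 - i)).real (Iio y) * v i - y :=
        sub_le_sub_right
          (mul_le_mul_of_nonneg_right (measureReal_mono (Iic_subset_Iio.2 hy.1)) hv) y
    _ ≤ pureUtil B v F i y := by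
        rw [pureUtil]
        gcongr
        exact measureReal_Iio_le_pureWinProb
    _ ≤ nashValue B v F i := hN.pureUtil_le_nashValue ⟨hx0.trans hy.1.le, hy.2.le⟩

lemma measureReal_zero_mul_le_nashValue (hv : 0 ≤ v i) (hB : 0 < B i) :
    (F (1 - i)).real {0} * v i ≤ nashValue B v F i := by
  have := hN.isProbabilityMeasure (1 - i)
  calc (F (1 - i)).real {0} * v i ≤ (F (1 - i)).real (Iic 0) * v i - 0 := by
        rw [sub_zero]
        exact mul_le_mul_of_nonneg_right (measureReal_mono (by simp)) hv
    _ ≤ nashValue B v F i := hN.le_nashValue_of_lt_budget hv le_rfl hB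

lemma winsTie_of_common_atom (hv : 0 < v i) (hi : F i {x} ≠ 0) (ho : F (1 - i) {x} ≠ 0)
    (hxB : x < B i) : WinsTie B v i x := by
  have := hN.isProbabilityMeasure (1 - i)
  have hup := hN.le_nashValue_of_lt_budget hv.le (hN.mem_Icc_of_measure_singleton_ne_zero hi).1 hxB
  rw [← hN.pureUtil_eq_of_measure_singleton_ne_zero hi, pureUtil, pureWinProb,
    measureReal_Iic_eq_add] at hup
  -- bidding just above `x` would win the whole atom of `F (1 - i)` at `x`, not only a share
  have hatom : 0 < (F (1 - i)).real {x} * v i := mul_pos (ENNReal.toReal_pos ho (by simp)) hv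
  refine winsTie_of_one_le_winProb_self (le_of_mul_le_mul_right ?_ hatom)
  linarith

lemma not_common_atom_lt_budgets (hv : ∀ j, 0 < v j) (hi : F i {x} ≠ 0)
    (ho : F (1 - i) {x} ≠ 0) (hxi : x < B i) (hxo : x < B (1 - i)) : False := by
  exact not_winsTie_opp_of_winsTie (hN.winsTie_of_common_atom (hv i) hi ho hxi)
    (hN.winsTie_of_common_atom (hv (1 - i)) ho (by rwa [sub_sub_cancel]) hxo)

lemma nashValue_opp_eq_of_winsTie (ho : F (1 - i) {x} ≠ 0) (hwin : WinsTie B v i x) :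
    nashValue B v F (1 - i) = (F i).real (Iio x) * v (1 - i) - x := by
  rw [← hN.pureUtil_eq_of_measure_singleton_ne_zero ho, pureUtil, pureWinProb,
    winProb_opp_self_of_winsTie hwin, sub_sub_cancel, zero_mul, add_zero]

lemma measure_opp_singleton_minBid_ne_zero (hv : 0 ≤ v i) (hle : minBid F i ≤ minBid F (1 - i))
    (hpos : 0 < nashValue B v F i + minBid F i) : F (1 - i) {minBid F i} ≠ 0 := by
  have := hN.isProbabilityMeasure (1 - i)
  intro h0
  have hbot := hN.nashValue_le_at_minBid hv
  rw [measureReal_Iic_eq_add, (measureReal_eq_zero_iff ..).2 h0,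
    (measureReal_eq_zero_iff ..).2 (measure_mono_null (Iio_subset_Iio hle)
      (hN.measure_Iio_minBid (1 - i)))] at hbot
  linarith

lemma supp_eq_singleton_of_minBid_eq (h : minBid F i = B i) : supp (F i) = {B i} := by
  refine eq_singleton_iff_nonempty_unique_mem.2 ⟨⟨_, hN.minBid_mem_supp i⟩, fun y hy => ?_⟩
  exact le_antisymm (hN.supp_subset_Icc i hy).2 (h ▸ hN.minBid_le_of_mem_supp hy)

lemma sInf_supp_eq_sSup (h : minBid F i = B i) : sInf (supp (F i)) = sSup (supp (F i)) := by
  rw [hN.supp_eq_singleton_of_minBid_eq h, csInf_singleton, csSup_singleton]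

lemma measure_singleton_budget_eq_one (h : minBid F i = B i) : F i {B i} = 1 := by
  have := hN.isProbabilityMeasure i
  rw [← prob_compl_eq_zero_iff (measurableSet_singleton _),
    ← hN.supp_eq_singleton_of_minBid_eq h, supp_eq_support]
  exact Measure.measure_compl_support

lemma common_atom_at_minBid (hv : ∀ j, 0 ≤ v j) (hsym : ∀ j, minBid F (1 - j) = minBid F j)
    (hpos : ∀ j, 0 < nashValue B v F j + minBid F j) (i : Fin 2) :
    F i {minBid F i} ≠ 0 ∧ F (1 - i) {minBid F i} ≠ 0 := by
  refine ⟨?_, hN.measure_opp_singleton_minBid_ne_zero (hv i) (hsym i).ge (hpos i)⟩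
  have hi := hN.measure_opp_singleton_minBid_ne_zero (hv (1 - i)) (by rw [sub_sub_cancel, hsym])
    (hpos (1 - i))
  rwa [sub_sub_cancel, hsym] at hi

lemma minBid_eq_budget_of_symm (hv : ∀ j, 0 < v j) (hB : ∀ j, B (1 - j) = B j)
    (hsym : ∀ j, minBid F (1 - j) = minBid F j) (hpos : ∀ j, 0 < nashValue B v F j + minBid F j)
    (i : Fin 2) : minBid F i = B i := by
  by_contra hne
  have hlt : minBid F i < B i := lt_of_le_of_ne (hN.minBid_mem_Icc i).2 hne
  obtain ⟨hi, ho⟩ := hN.common_atom_at_minBid (fun j => (hv j).le) hsym hpos i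
  exact hN.not_common_atom_lt_budgets hv hi ho hlt (by rwa [hB])

lemma pureUtil_budget_of_budget_eq (hBB : B (1 - i) = B i)
    (hmin : min (B (1 - i)) (v (1 - i)) = min (B i) (v i)) :
    pureUtil B v F i (B i) = (1 + (F (1 - i)).real (Iio (B i))) / 2 * v i - B i := by
  have := hN.isProbabilityMeasure (1 - i)
  have htot := hN.measureReal_Iic_budget (1 - i)
  rw [hBB, measureReal_Iic_eq_add] at htot
  rw [pureUtil, pureWinProb, winProb_self_eq_half_of_min_eq hmin,
    show (F (1 - i)).real {B i} = 1 - (F (1 - i)).real (Iio (B i)) by linarith]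
  ring

lemma pureUtil_eq_neg_of_lt_minBid (h : x < minBid F (1 - i)) : pureUtil B v F i x = -x := by
  have := hN.isProbabilityMeasure (1 - i)
  have hW : pureWinProb B v F i x = 0 := by
    refine le_antisymm (pureWinProb_le_measureReal_Iic.trans_eq ?_)
      (measureReal_nonneg.trans measureReal_Iio_le_pureWinProb)
    exact (measureReal_eq_zero_iff ..).2
      (measure_mono_null (Iic_subset_Iio.2 h) (hN.measure_Iio_minBid _))
  rw [pureUtil, hW, zero_mul, zero_sub]

lemma nashValue_eq_zero_and_minBid_eq_zero_of_lt (hv : 0 ≤ v i)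
    (h : minBid F i < minBid F (1 - i)) : nashValue B v F i = 0 ∧ minBid F i = 0 := by
  obtain ⟨x, ⟨hx, hopt⟩, hxlt⟩ :=
    ((hN.frequently_optimal_near_minBid i).and_eventually (Iio_mem_nhds h)).exists
  rw [hN.pureUtil_eq_neg_of_lt_minBid hxlt] at hopt
  have := hN.nashValue_nonneg hv
  have := (hN.minBid_mem_Icc i).1
  constructor <;> linarith

lemma measure_Iio_minBid_opp_eq (hv : 0 ≤ v i) (h : minBid F i < minBid F (1 - i)) :
    F i (Iio (minBid F (1 - i))) = F i {0} := by
  obtain ⟨hu, ht⟩ := hN.nashValue_eq_zero_and_minBid_eq_zero_of_lt hv h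
  have hzero : ∀ᵐ y ∂F i, y < minBid F (1 - i) → y = 0 := by
    filter_upwards [hN.ae_pureUtil_eq i] with y hy hlt
    rw [hN.pureUtil_eq_neg_of_lt_minBid hlt, hu, neg_eq_zero] at hy
    exact hy
  rw [← measure_inter_conull (ae_iff.1 hzero)]
  congr 1
  ext y
  exact ⟨fun hy => hy.2 hy.1, fun hy => ⟨hy ▸ ht ▸ h, fun _ => hy⟩⟩

lemma measure_singleton_zero_ne_zero_of_lt (hv : 0 ≤ v i) (h : minBid F i < minBid F (1 - i)) :
    F i {0} ≠ 0 := by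
  have ht := (hN.nashValue_eq_zero_and_minBid_eq_zero_of_lt hv h).2
  have hmem := hN.minBid_mem_supp i
  rw [ht] at hmem h
  rw [← hN.measure_Iio_minBid_opp_eq hv (ht ▸ h)]
  exact hmem _ (Iio_mem_nhds h)

lemma measure_singleton_minBid_opp_ne_zero_of_lt (hv : ∀ j, 0 ≤ v j)
    (h : minBid F i < minBid F (1 - i)) : F i {minBid F (1 - i)} ≠ 0 := by
  have := hN.isProbabilityMeasure i
  have ht0 : 0 < minBid F (1 - i) := (hN.minBid_mem_Icc i).1.trans_lt h
  have hup := hN.nashValue_le_at_minBid (hv (1 - i))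
  have hlow := hN.measureReal_zero_mul_le_nashValue (hv (1 - i))
    (ht0.trans_le (hN.minBid_mem_Icc (1 - i)).2)
  rw [sub_sub_cancel] at hup hlow
  rw [measureReal_Iic_eq_add, measureReal_def, hN.measure_Iio_minBid_opp_eq (hv i) h,
    ← measureReal_def] at hup
  intro h0
  rw [(measureReal_eq_zero_iff ..).2 h0] at hup
  linarith

lemma minBid_opp_eq_budget_of_lt (hv : ∀ j, 0 < v j) (h : minBid F i < minBid F (1 - i)) :
    minBid F (1 - i) = B (1 - i) := by
  have := hN.isProbabilityMeasure (1 - i)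
  set t := minBid F (1 - i)
  have hatom := hN.measure_singleton_minBid_opp_ne_zero_of_lt (fun j => (hv j).le) h
  have hu : pureUtil B v F i t = 0 := by
    rw [hN.pureUtil_eq_of_measure_singleton_ne_zero hatom,
      (hN.nashValue_eq_zero_and_minBid_eq_zero_of_lt (hv i).le h).1]
  rw [pureUtil, pureWinProb, (measureReal_eq_zero_iff ..).2 (hN.measure_Iio_minBid _),
    zero_add] at hu
  -- `i` wins the tie at `t` with positive probability, so `1 - i` does not win it outright
  have hwin : 0 < winProb B v i t t * (F (1 - i)).real {t} :=
    pos_of_mul_pos_left (by linarith [(hN.minBid_mem_Icc i).1.trans_lt h]) (hv i).le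
  by_contra hne
  have hlt : t < B (1 - i) := lt_of_le_of_ne (hN.minBid_mem_Icc _).2 hne
  have hbatom : F (1 - i) {t} ≠ 0 := fun h0 => by
    rw [(measureReal_eq_zero_iff ..).2 h0, mul_zero] at hwin
    exact hwin.false
  have hlose := winProb_opp_self_of_winsTie
    (hN.winsTie_of_common_atom (hv (1 - i)) hbatom (by rwa [sub_sub_cancel]) hlt)
  rw [sub_sub_cancel] at hlose
  rw [hlose, zero_mul] at hwin
  exact hwin.false

lemma two_mul_budget_lt_of_minBid_lt (hv : ∀ j, 0 < v j) (hBB : B i = B (1 - i))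
    (hmin : min (B i) (v i) = min (B (1 - i)) (v (1 - i)))
    (h : minBid F i < minBid F (1 - i)) : 2 * B (1 - i) < v (1 - i) := by
  have := hN.isProbabilityMeasure i
  have htb := hN.minBid_opp_eq_budget_of_lt hv h
  have hIio : (F i).real (Iio (B (1 - i))) = (F i).real {0} := by
    rw [measureReal_def, measureReal_def, ← htb, hN.measure_Iio_minBid_opp_eq (hv i).le h]
  have hub := hN.pureUtil_eq_of_measure_singleton_ne_zero
    ((hN.measure_singleton_budget_eq_one htb).trans_ne one_ne_zero)
  rw [hN.pureUtil_budget_of_budget_eq (by rwa [sub_sub_cancel]) (by rwa [sub_sub_cancel]),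
    sub_sub_cancel, hIio] at hub
  have hlow := hN.measureReal_zero_mul_le_nashValue (hv (1 - i)).le
    ((hN.minBid_mem_Icc i).1.trans_lt (h.trans_eq htb))
  rw [sub_sub_cancel] at hlow
  have hα : 0 < (F i).real {0} :=
    ENNReal.toReal_pos (hN.measure_singleton_zero_ne_zero_of_lt (hv i).le h) (by simp)
  nlinarith [mul_pos hα (hv (1 - i))]

lemma nashValue_add_minBid_pos_of_symm (hv : 0 < v i) (hBv : 2 * B i ≤ v i) (hBpos : 0 < B i)
    (hBB : B (1 - i) = B i) (hmin : min (B (1 - i)) (v (1 - i)) = min (B i) (v i))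
    (hsym : minBid F (1 - i) = minBid F i) : 0 < nashValue B v F i + minBid F i := by
  have := hN.isProbabilityMeasure (1 - i)
  by_contra hle
  have hu := hN.nashValue_nonneg hv.le
  have ht := (hN.minBid_mem_Icc i).1
  have hdev := hN.pureUtil_le_nashValue ⟨hBpos.le, le_rfl⟩
  rw [hN.pureUtil_budget_of_budget_eq hBB hmin] at hdev
  have hβ : (F (1 - i)).real (Iio (B i)) ≤ 0 := by nlinarith
  -- but then `0 = minBid F (1 - i)` would not lie in the support of `F (1 - i)`
  have hmem := hN.minBid_mem_supp (1 - i)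
  rw [hsym, show minBid F i = 0 by linarith] at hmem
  exact hmem _ (Iio_mem_nhds hBpos)
    ((measureReal_eq_zero_iff ..).1 (le_antisymm hβ measureReal_nonneg))

lemma minBid_eq_budget_of_lt_half (hv : ∀ j, 0 < v j) (hBB : B 0 = B 1)
    (hlt : B 1 < 1 / 2 * min (v 0) (v 1)) (i : Fin 2) : minBid F i = B i := by
  have hB := apply_one_sub_eq_of_eq hBB
  have hBv : ∀ j, 2 * B j < v j := by
    intro j
    fin_cases j <;> simp only [Fin.zero_eta, Fin.mk_one, hBB] <;>
      linarith [min_le_left (v 0) (v 1), min_le_right (v 0) (v 1)]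
  have hmin := min_eq_of_budget_eq (v := v) hB fun j => by linarith [hBv j, hN.budget_nonneg j]
  have hupos : ∀ j, 0 < nashValue B v F j := fun j => by
    have hdev := hN.pureUtil_le_nashValue ⟨hN.budget_nonneg j, le_rfl⟩
    rw [hN.pureUtil_budget_of_budget_eq (hB j) (hmin j)] at hdev
    nlinarith [measureReal_nonneg (μ := F (1 - j)) (s := Iio (B j)), hv j, hBv j]
  have hsym : ∀ j, minBid F (1 - j) = minBid F j := by
    rcases exists_lt_apply_one_sub_or_eq (minBid F) with ⟨a, ha⟩ | h
    · exact absurd (hN.nashValue_eq_zero_and_minBid_eq_zero_of_lt (hv a).le ha).1 (hupos a).ne'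
    · exact h
  exact hN.minBid_eq_budget_of_symm hv hB hsym
    (fun j => add_pos_of_pos_of_nonneg (hupos j) (hN.minBid_mem_Icc j).1) i

lemma minBid_eq_zero_or_budget_of_eq_half (hv : ∀ j, 0 < v j) (hBB : B 0 = B 1)
    (hhalf : B 1 = 1 / 2 * min (v 0) (v 1)) (i : Fin 2) (hvi : v i = min (v 0) (v 1)) :
    (∀ k, minBid F k = B k) ∨ (minBid F i = 0 ∧ minBid F (1 - i) = B (1 - i)) := by
  have hB := apply_one_sub_eq_of_eq hBB
  have hBmin : ∀ j, 2 * B j = min (v 0) (v 1) := by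
    intro j
    fin_cases j <;> simp only [Fin.zero_eta, Fin.mk_one, hBB] <;> linarith
  have hBv : ∀ j, 2 * B j ≤ v j := by
    intro j
    fin_cases j <;> simp only [Fin.zero_eta, Fin.mk_one, hBmin, min_le_left, min_le_right]
  have hBpos : ∀ j, 0 < B j := fun j => by linarith [hBmin j, lt_min (hv 0) (hv 1)]
  have hmin := min_eq_of_budget_eq (v := v) hB fun j => by linarith [hBv j, hBpos j]
  rcases exists_lt_apply_one_sub_or_eq (minBid F) with ⟨a, ha⟩ | hsym
  · right
    rcases eq_or_eq_one_sub i a with rfl | rfl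
    · exact ⟨(hN.nashValue_eq_zero_and_minBid_eq_zero_of_lt (hv i).le ha).2,
        hN.minBid_opp_eq_budget_of_lt hv ha⟩
    · exact absurd (hvi.trans (hBmin _).symm)
        (hN.two_mul_budget_lt_of_minBid_lt hv (hB a).symm (hmin a).symm ha).ne'
  · exact Or.inl (hN.minBid_eq_budget_of_symm hv hB hsym fun j =>
      hN.nashValue_add_minBid_pos_of_symm (hv j) (hBv j) (hBpos j) (hB j) (hmin j) (hsym j))

lemma not_minBid_lt_of_budget_ne (hv : ∀ j, 0 < v j) (hBB : B 0 ≠ B 1)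
    (h : minBid F i < minBid F (1 - i)) : False := by
  have ht0 : 0 < minBid F (1 - i) := (hN.minBid_mem_Icc i).1.trans_lt h
  have htb := hN.minBid_opp_eq_budget_of_lt hv h
  have hi := hN.measure_singleton_minBid_opp_ne_zero_of_lt (fun j => (hv j).le) h
  have ho : F (1 - i) {minBid F (1 - i)} ≠ 0 := by
    rw [htb, hN.measure_singleton_budget_eq_one htb]
    exact one_ne_zero
  have hlt : minBid F (1 - i) < B i := lt_of_le_of_ne (hN.mem_Icc_of_measure_singleton_ne_zero hi).2
    fun h => hBB (eq_of_apply_one_sub_eq (htb.symm.trans h))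
  -- `i` wins the tie at the common atom, which caps what `1 - i` earns there
  have hopp := hN.nashValue_opp_eq_of_winsTie ho (hN.winsTie_of_common_atom (hv i) hi ho hlt)
  have hlow := hN.measureReal_zero_mul_le_nashValue (hv (1 - i)).le
    (ht0.trans_le (hN.minBid_mem_Icc _).2)
  have hIio : (F i).real (Iio (minBid F (1 - i))) = (F i).real {0} := by
    rw [measureReal_def, measureReal_def, hN.measure_Iio_minBid_opp_eq (hv i).le h]
  rw [sub_sub_cancel] at hlow
  rw [hIio] at hopp
  linarith

lemma not_minBid_lt_budget_of_symm (hv : ∀ j, 0 < v j)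
    (hsym : ∀ j, minBid F (1 - j) = minBid F j) (hpos : 0 < minBid F i)
    (hlt : minBid F i < B i) : False := by
  have := hN.isProbabilityMeasure i
  have hupos : ∀ j, 0 < nashValue B v F j + minBid F j := fun j => by
    have hu := hN.nashValue_nonneg (hv j).le
    rcases eq_or_eq_one_sub j i with rfl | rfl
    · linarith
    · rw [hsym]
      linarith
  obtain ⟨hi, ho⟩ := hN.common_atom_at_minBid (fun j => (hv j).le) hsym hupos i
  -- `i` wins the tie at the common atom, so there `1 - i` pays `minBid F i` and never wins
  have hopp := hN.nashValue_opp_eq_of_winsTie ho (hN.winsTie_of_common_atom (hv i) hi ho hlt)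
  rw [(measureReal_eq_zero_iff ..).2 (hN.measure_Iio_minBid i), zero_mul, zero_sub] at hopp
  linarith [hN.nashValue_nonneg (hv (1 - i)).le]

lemma minBid_eq_zero_of_budget_ne (hv : ∀ j, 0 < v j) (hBB : B 0 ≠ B 1) (i : Fin 2) :
    minBid F i = 0 := by
  have hsym : ∀ j, minBid F (1 - j) = minBid F j := by
    rcases exists_lt_apply_one_sub_or_eq (minBid F) with ⟨a, ha⟩ | h
    · exact (hN.not_minBid_lt_of_budget_ne hv hBB ha).elim
    · exact h
  by_contra hne
  have hpos : 0 < minBid F i := lt_of_le_of_ne (hN.minBid_mem_Icc i).1 (Ne.symm hne)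
  rcases (hN.minBid_mem_Icc i).2.lt_or_eq with hlt | heq
  · exact hN.not_minBid_lt_budget_of_symm hv hsym hpos hlt
  · refine hN.not_minBid_lt_budget_of_symm hv hsym ((hsym i).symm ▸ hpos)
      (lt_of_le_of_ne (hN.minBid_mem_Icc (1 - i)).2 fun h => hBB ?_)
    exact eq_of_apply_one_sub_eq (h.symm.trans ((hsym i).trans heq))

end IsNash

theorem support_structure (B v : Fin 2 → ℝ) (hv : ∀ i, 0 < v i)
    (F : Fin 2 → Measure ℝ) (hN : IsNash B v F) :
    (B 0 = B 1 ∧ B 1 < 1 / 2 * min (v 0) (v 1) →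
      ∀ i, sInf (supp (F i)) = sSup (supp (F i))) ∧
    (∀ i : Fin 2, B 0 = B 1 → B 1 = 1 / 2 * min (v 0) (v 1) →
      v i = min (v 0) (v 1) →
      ((∀ k, sInf (supp (F k)) = sSup (supp (F k))) ∨
        (sInf (supp (F i)) = 0 ∧
          sInf (supp (F (1 - i))) = sSup (supp (F (1 - i)))))) ∧
    (B 0 ≠ B 1 → ∀ i, sInf (supp (F i)) = 0) := by
  refine ⟨fun ⟨hBB, hlt⟩ i =>
      hN.sInf_supp_eq_sSup (hN.minBid_eq_budget_of_lt_half hv hBB hlt i),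
    fun i hBB hhalf hvi => ?_, fun hBB => hN.minBid_eq_zero_of_budget_ne hv hBB⟩
  rcases hN.minBid_eq_zero_or_budget_of_eq_half hv hBB hhalf i hvi with h | ⟨h0, h1⟩
  · exact Or.inl fun k => hN.sInf_supp_eq_sSup (h k)
  · exact Or.inr ⟨h0, hN.sInf_supp_eq_sSup h1⟩
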